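/- arXiv:1205.6460 — 4 statements merged into one kernel-verified Lean document; each statement's English description precedes it below -/
import Mathlib

section
/- Let (α,β) be an admissible non-null pair of infinite binary strings. Then there exists a real number x with 1/2 ≤ x < 1 such that Σ_{n≥0} α_n·xⁿ = Σ_{n≥0} β_n·xⁿ. -/
open scoped Classical

/-- Infinite binary strings. -/
abbrev Omega : Type := ℕ → Bool

/-- The shift operator. -/
def shift (ω : Omega) : Omega := fun n => ω (n + 1)

/-- Strict lexicographic order on `Omega`. -/
def lexLt (σ ω : Omega) : Prop :=
  ∃ k : ℕ, (∀ i, i < k → σ i = ω i) ∧ σ k < ω k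

/-- Non-strict lexicographic order on `Omega`. -/
def lexLe (σ ω : Omega) : Prop := lexLt σ ω ∨ σ = ω

/-- An admissible pair of strings. -/
def Admissible (α β : Omega) : Prop :=
  α 0 = false ∧ α 1 = true ∧ β 0 = true ∧ β 1 = false ∧
  (∀ n : ℕ, ¬ (lexLt α (shift^[n] α) ∧ lexLe (shift^[n] α) β)) ∧
  (∀ n : ℕ, ¬ (lexLe α (shift^[n] β) ∧ lexLt (shift^[n] β) β))

/-- The address space `Ω_{(α,β,−)}`. -/
def OmegaMinus (α β : Omega) : Set Omega :=
  {ω | ∀ n : ℕ, ¬ (lexLt α (shift^[n] ω) ∧ lexLe (shift^[n] ω) β)}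

/-- The address space `Ω_{(α,β,+)}`. -/
def OmegaPlus (α β : Omega) : Set Omega :=
  {ω | ∀ n : ℕ, ¬ (lexLe α (shift^[n] ω) ∧ lexLt (shift^[n] ω) β)}

/-- The address space `Ω_{(α,β)}`. -/
def OmegaUnion (α β : Omega) : Set Omega := OmegaMinus α β ∪ OmegaPlus α β

/-- Length-`n` initial segments of the elements of `Γ`. -/
def initSegs (Γ : Set Omega) (n : ℕ) : Set (Fin n → Bool) :=
  (fun ω (i : Fin n) => ω i) '' Γ

/-- Exponential growth rate `h(Γ)`. -/
noncomputable def growth (Γ : Set Omega) : ℝ :=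
  Filter.limsup (fun n : ℕ => Real.log ((initSegs Γ n).ncard) / (n : ℝ)) Filter.atTop

/-- The projection map `π_x`. -/
noncomputable def proj (x : ℝ) (ω : Omega) : ℝ :=
  (1 - x) * ∑' k : ℕ, (if ω k then (1 : ℝ) else 0) * x ^ k

/-- The equation `Σ α_n x^n = Σ β_n x^n`. -/
def seriesEq (α β : Omega) (x : ℝ) : Prop :=
  (∑' n : ℕ, (if α n then (1 : ℝ) else 0) * x ^ n) =
    (∑' n : ℕ, (if β n then (1 : ℝ) else 0) * x ^ n)

/-- Solutions in `[1/2,1)` of `Σ α_n x^n = Σ β_n x^n`. -/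
def baseSet (α β : Omega) : Set ℝ :=
  {x : ℝ | x ∈ Set.Ico (1/2 : ℝ) 1 ∧ seriesEq α β x}

/-- A decimal: a two-sided binary string vanishing far to the left. -/
def IsDecimal (d : ℤ → Bool) : Prop := ∃ m : ℤ, ∀ j, j < m → d j = false

/-- Strict order on decimals. -/
def decLt (d e : ℤ → Bool) : Prop :=
  ∃ j : ℤ, (∀ i, i < j → d i = e i) ∧ d j < e j

/-- The set `Γ^•` of decimals obtained from strings in `Γ`. -/
def dot (Γ : Set Omega) : Set (ℤ → Bool) :=
  {d | ∃ m : ℤ, ∃ γ ∈ Γ, (∀ j, j < m → d j = false) ∧ ∀ i : ℕ, d (m + i) = γ i}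

/-- Prepend a `0` to a string. -/
def cons0 (ω : Omega) : Omega := fun n => match n with | 0 => false | k + 1 => ω k

/-- The space `Ω⁰_{(α,β,−)}`. -/
def Omega0Minus (α β : Omega) : Set Omega :=
  {ω ∈ OmegaMinus α β | lexLe (cons0 ω) α}

/-- The space `Ω⁰_{(α,β,+)}`. -/
def Omega0Plus (α β : Omega) : Set Omega :=
  {ω ∈ OmegaPlus α β | lexLt (cons0 ω) α}

/-- The address space of decimals `Ω^•_{(α,β,−)}`. -/
def dotMinus (α β : Omega) : Set (ℤ → Bool) := dot (Omega0Minus α β)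

/-- The address space of decimals `Ω^•_{(α,β,+)}`. -/
def dotPlus (α β : Omega) : Set (ℤ → Bool) := dot (Omega0Plus α β)

/-- The address space of decimals `Ω^•_{(α,β)}`. -/
def dotUnion (α β : Omega) : Set (ℤ → Bool) :=
  dot (Omega0Minus α β ∪ Omega0Plus α β)

/-- The radix map `d ↦ Σ_{j ∈ ℤ} d(j)·B^(−j)`. -/
noncomputable def radixVal (B : ℝ) (d : ℤ → Bool) : ℝ :=
  ∑' j : ℤ, (if d j then (1 : ℝ) else 0) * B ^ (-j)

/-- Shift invariance for a set of decimals. -/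
def ShiftInvariantDec (Γ : Set (ℤ → Bool)) : Prop :=
  ∀ d ∈ Γ, ∀ k m : ℤ,
    (fun j : ℤ => if m ≤ j then d (j + k) else false) ∈ Γ

/-!
Put `F(x) = Σ βₙ xⁿ - Σ αₙ xⁿ`. As `F(1/2) ≥ 0`, by the intermediate value theorem it suffices to
show that the pair is null if `F > 0` on `[1/2, 1)`. Strings of `Ω_{(α,β)}` starting with `0` lie
lexicographically below `α`, those starting with `1` above `β`. By continuous induction from
`x = 1/2`, at every `x ∈ [1/2, 1)` the series of the latter are at least those of the former; so
`ω ↦ Σ ωₙ xⁿ` is lexicographically monotone on `Ω_{(α,β)}`, and the gap between the two kinds is at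
least `F(x)`. Splitting at the first index where they differ, strings with distinct length-`n`
prefixes have values at least `xⁿ F(x)` apart in `[0, (1 - x)⁻¹]`, so there are `O(x⁻ⁿ)` such
prefixes and `h(Ω_{(α,β)}) ≤ log (1/x)` for every `x < 1`.
-/

open Set Filter Topology

noncomputable def bitSeries (x : ℝ) (ω : Omega) : ℝ :=
  ∑' n : ℕ, (if ω n then (1 : ℝ) else 0) * x ^ n

theorem shift_iterate_apply (ω : Omega) (k i : ℕ) : shift^[k] ω i = ω (i + k) := by
  induction k generalizing ω with
  | zero => rfl
  | succ k ih => rw [Function.iterate_succ_apply, ih]; rfl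

section BitSeries

variable {x y c : ℝ} {σ ω : Omega}

theorem summable_bitSeries (hx0 : 0 ≤ x) (hx1 : x < 1) (ω : Omega) :
    Summable (fun n => (if ω n then (1 : ℝ) else 0) * x ^ n) :=
  (summable_geometric_of_lt_one hx0 hx1).of_nonneg_of_le (fun n => by positivity)
    (fun n => by split_ifs <;> simp [pow_nonneg hx0])

theorem bitSeries_nonneg (hx0 : 0 ≤ x) (ω : Omega) : 0 ≤ bitSeries x ω :=
  tsum_nonneg fun n => by positivity

theorem bitSeries_add_bitSeries_not (hx0 : 0 ≤ x) (hx1 : x < 1) (ω : Omega) :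
    bitSeries x ω + bitSeries x (fun n => !ω n) = (1 - x)⁻¹ := by
  rw [bitSeries, bitSeries, ← (summable_bitSeries hx0 hx1 ω).tsum_add
    (summable_bitSeries hx0 hx1 _), ← tsum_geometric_of_lt_one hx0 hx1]
  congr 1 with n
  cases ω n <;> simp

theorem bitSeries_le (hx0 : 0 ≤ x) (hx1 : x < 1) (ω : Omega) : bitSeries x ω ≤ (1 - x)⁻¹ := by
  linarith [bitSeries_add_bitSeries_not hx0 hx1 ω, bitSeries_nonneg hx0 (fun n => !ω n)]

theorem bitSeries_mono (hy : 0 ≤ y) (hyx : y ≤ x) (hx : x < 1) (ω : Omega) :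
    bitSeries y ω ≤ bitSeries x ω :=
  (summable_bitSeries hy (hyx.trans_lt hx) ω).tsum_le_tsum
    (fun n => by gcongr) (summable_bitSeries (hy.trans hyx) hx ω)

/-- The series of `ω` and of its complement `!ω` are both nondecreasing and add up to
`(1 - x)⁻¹`. -/
theorem bitSeries_sub_le (hy : 0 ≤ y) (hyx : y ≤ x) (hx : x < 1) (ω : Omega) :
    bitSeries x ω - bitSeries y ω ≤ (1 - x)⁻¹ - (1 - y)⁻¹ := by
  linarith [bitSeries_add_bitSeries_not (hy.trans hyx) hx ω,
    bitSeries_add_bitSeries_not hy (hyx.trans_lt hx) ω, bitSeries_mono hy hyx hx (fun n => !ω n)]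

theorem continuousOn_bitSeries (hc : c < 1) (ω : Omega) :
    ContinuousOn (bitSeries · ω) (Icc 0 c) := by
  rcases lt_or_ge c 0 with hc0 | hc0
  · simp [Icc_eq_empty_of_lt hc0]
  refine continuousOn_tsum (u := fun n => c ^ n) (fun n => by fun_prop)
    (summable_geometric_of_lt_one hc0 hc) fun n z hz => ?_
  rw [norm_mul, norm_pow, Real.norm_of_nonneg hz.1]
  split_ifs <;> simp [pow_le_pow_left₀ hz.1 hz.2, pow_nonneg hc0]

theorem bitSeries_eq_sum_add (hx0 : 0 ≤ x) (hx1 : x < 1) (ω : Omega) (k : ℕ) :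
    bitSeries x ω = ∑ i ∈ Finset.range k, (if ω i then (1 : ℝ) else 0) * x ^ i
      + x ^ k * bitSeries x (shift^[k] ω) := by
  rw [bitSeries, ← (summable_bitSeries hx0 hx1 ω).sum_add_tsum_nat_add k, bitSeries,
    ← tsum_mul_left]
  congr 2 with i
  rw [shift_iterate_apply, pow_add]
  ring

theorem bitSeries_sub_bitSeries_of_eqOn (hx0 : 0 ≤ x) (hx1 : x < 1) {k : ℕ}
    (h : ∀ i < k, σ i = ω i) :
    bitSeries x ω - bitSeries x σ =
      x ^ k * (bitSeries x (shift^[k] ω) - bitSeries x (shift^[k] σ)) := by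
  rw [bitSeries_eq_sum_add hx0 hx1 ω k, bitSeries_eq_sum_add hx0 hx1 σ k,
    Finset.sum_congr rfl fun i hi => by rw [← h i (Finset.mem_range.mp hi)]]
  ring

theorem one_le_bitSeries (hx0 : 0 ≤ x) (hx1 : x < 1) (h : ω 0 = true) : 1 ≤ bitSeries x ω := by
  simpa [h, bitSeries] using (summable_bitSeries hx0 hx1 ω).le_tsum 0 fun n _ => by positivity

theorem bitSeries_le_of_head_false (hx0 : 0 ≤ x) (hx1 : x < 1) (h : ω 0 = false) :
    bitSeries x ω ≤ x * (1 - x)⁻¹ := by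
  rw [bitSeries_eq_sum_add hx0 hx1 ω 1]
  simpa [h] using mul_le_mul_of_nonneg_left (bitSeries_le hx0 hx1 (shift ω)) hx0

end BitSeries

theorem lexLt_iff_toLex_lt {σ ω : Omega} : lexLt σ ω ↔ toLex σ < toLex ω := Iff.rfl

theorem lexLe_iff_toLex_le {σ ω : Omega} : lexLe σ ω ↔ toLex σ ≤ toLex ω := by
  rw [lexLe, lexLt_iff_toLex_lt, le_iff_lt_or_eq, toLex_inj]
  exact Iff.rfl

theorem exists_eqOn_of_toLex_lt {σ ω : Omega} (h : toLex σ < toLex ω) :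
    ∃ k, (∀ i < k, σ i = ω i) ∧ σ k = false ∧ ω k = true := by
  obtain ⟨k, hk, hlt⟩ := h
  exact ⟨k, hk, Bool.lt_iff.mp hlt⟩

theorem toLex_lt_of_head {σ ω : Omega} (hσ : σ 0 = false) (hω : ω 0 = true) :
    toLex σ < toLex ω :=
  ⟨0, fun _ h => absurd h (Nat.not_lt_zero _), by simp [hσ, hω]⟩

def HeadGap (Γ : Set Omega) (x μ : ℝ) : Prop :=
  ∀ u ∈ Γ, ∀ v ∈ Γ, u 0 = false → v 0 = true → μ ≤ bitSeries x v - bitSeries x u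

namespace HeadGap

variable {Γ : Set Omega} {x y μ : ℝ} {σ ω : Omega}

/-- From the first index where `σ` and `ω` differ on, their tails lie in `Γ` and start with `0`
and `1`. -/
theorem exists_pow_mul_le (hx0 : 0 ≤ x) (hx1 : x < 1) (hΓ : MapsTo shift Γ Γ)
    (h : HeadGap Γ x μ) (hσ : σ ∈ Γ) (hω : ω ∈ Γ) (hlt : toLex σ < toLex ω) :
    ∃ k, (∀ i < k, σ i = ω i) ∧ x ^ k * μ ≤ bitSeries x ω - bitSeries x σ := by
  obtain ⟨k, hk, hσk, hωk⟩ := exists_eqOn_of_toLex_lt hlt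
  refine ⟨k, hk, ?_⟩
  rw [bitSeries_sub_bitSeries_of_eqOn hx0 hx1 hk]
  exact mul_le_mul_of_nonneg_left (h _ (hΓ.iterate k hσ) _ (hΓ.iterate k hω)
    (by rwa [shift_iterate_apply, zero_add]) (by rwa [shift_iterate_apply, zero_add]))
    (pow_nonneg hx0 k)

theorem bitSeries_le (hx0 : 0 ≤ x) (hx1 : x < 1) (hΓ : MapsTo shift Γ Γ) (h : HeadGap Γ x 0)
    (hσ : σ ∈ Γ) (hω : ω ∈ Γ) (hle : toLex σ ≤ toLex ω) : bitSeries x σ ≤ bitSeries x ω := by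
  rcases hle.lt_or_eq with hlt | heq
  · obtain ⟨k, -, hk⟩ := h.exists_pow_mul_le hx0 hx1 hΓ hσ hω hlt
    linarith
  · rw [toLex_inj.mp heq]

theorem pow_mul_le_abs_sub (hx0 : 0 ≤ x) (hx1 : x < 1) (hΓ : MapsTo shift Γ Γ)
    (h : HeadGap Γ x μ) (hμ : 0 ≤ μ) (hσ : σ ∈ Γ) (hω : ω ∈ Γ) {i n : ℕ} (hin : i < n)
    (hne : σ i ≠ ω i) : x ^ n * μ ≤ |bitSeries x σ - bitSeries x ω| := by
  have key : ∀ {a b : Omega}, a ∈ Γ → b ∈ Γ → toLex a < toLex b → a i ≠ b i →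
      x ^ n * μ ≤ bitSeries x b - bitSeries x a := fun ha hb hlt hab => by
    obtain ⟨k, hk, hgap⟩ := h.exists_pow_mul_le hx0 hx1 hΓ ha hb hlt
    have hki : k ≤ i := not_lt.mp fun hik => hab (hk i hik)
    calc x ^ n * μ ≤ x ^ k * μ :=
          mul_le_mul_of_nonneg_right (pow_le_pow_of_le_one hx0 hx1.le (hki.trans_lt hin).le) hμ
      _ ≤ _ := hgap
  rcases lt_trichotomy (toLex σ) (toLex ω) with hlt | heq | hgt
  · rw [abs_sub_comm]; exact (key hσ hω hlt hne).trans (le_abs_self _)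
  · exact absurd (congrFun (toLex_inj.mp heq) i) hne
  · exact (key hω hσ hgt hne.symm).trans (le_abs_self _)

theorem of_le (h : HeadGap Γ y μ) (hy : 0 ≤ y) (hyx : y ≤ x) (hx : x < 1) :
    HeadGap Γ x (μ - ((1 - x)⁻¹ - (1 - y)⁻¹)) := fun u hu v hv hu0 hv0 => by
  linarith [h u hu v hv hu0 hv0, bitSeries_mono hy hyx hx v, bitSeries_sub_le hy hyx hx u]

end HeadGap

theorem headGap_zero_of_le_half {Γ : Set Omega} {x : ℝ} (hx0 : 0 ≤ x) (hx : x ≤ 1 / 2) :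
    HeadGap Γ x 0 := fun u _ v _ hu hv => by
  have hx1 : x < 1 := by linarith
  have : x * (1 - x)⁻¹ ≤ 1 := by
    rw [← div_eq_mul_inv, div_le_one (by linarith)]; linarith
  linarith [bitSeries_le_of_head_false hx0 hx1 hu, one_le_bitSeries hx0 hx1 hv]

theorem isClosed_setOf_headGap_zero_inter {Γ : Set Omega} {a c : ℝ} (ha : 0 ≤ a) (hc : c < 1) :
    IsClosed ({x | HeadGap Γ x 0} ∩ Icc a c) := by
  have hcont : ∀ ω, ContinuousOn (bitSeries · ω) (Icc a c) := fun ω =>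
    (continuousOn_bitSeries hc ω).mono (Icc_subset_Icc_left ha)
  have : {x | HeadGap Γ x 0} ∩ Icc a c = Icc a c ∩ ⋂ u ∈ Γ, ⋂ v ∈ Γ,
      ⋂ (_ : u 0 = false ∧ v 0 = true), {x ∈ Icc a c | bitSeries x u ≤ bitSeries x v} := by
    ext x
    simp only [HeadGap, mem_inter_iff, mem_ofPred_eq, mem_iInter, sub_nonneg]
    grind
  rw [this]
  exact isClosed_Icc.inter <| isClosed_biInter fun u _ => isClosed_biInter fun v _ =>
    isClosed_iInter fun _ => isClosed_Icc.isClosed_le (hcont u) (hcont v)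

/-- A packing bound: values `δ`-apart in `[0, M]` fall into distinct intervals `[jδ, (j+1)δ)`. -/
theorem ncard_image_le_of_separated {X Y : Type*} [Nonempty X] {s : Set X} (π : X → Y)
    (f : X → ℝ) {M δ : ℝ} (hM : 0 ≤ M) (hδ : 0 < δ) (hf : ∀ a ∈ s, f a ∈ Icc 0 M)
    (hsep : ∀ a ∈ s, ∀ b ∈ s, π a ≠ π b → δ ≤ |f a - f b|) :
    ((π '' s).ncard : ℝ) ≤ M / δ + 1 := by
  set rep := Function.invFunOn π s
  have hrep : ∀ p ∈ π '' s, rep p ∈ s ∧ π (rep p) = p := fun p hp => Function.invFunOn_pos hp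
  set g : Y → ℕ := fun p => ⌊f (rep p) / δ⌋₊
  have hmaps : ∀ p ∈ π '' s, g p ∈ (Finset.range (⌊M / δ⌋₊ + 1) : Set ℕ) := fun p hp => by
    have := (hf _ (hrep p hp).1).2
    simp only [Finset.coe_range, mem_Iio, g]
    exact Nat.lt_succ_of_le (Nat.floor_le_floor (div_le_div_of_nonneg_right this hδ.le))
  have hinj : InjOn g (π '' s) := by
    intro p hp q hq hpq
    by_contra hne
    have hsep' := hsep _ (hrep p hp).1 _ (hrep q hq).1 (by rwa [(hrep p hp).2, (hrep q hq).2])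
    have hfloor : ⌊f (rep p) / δ⌋ = ⌊f (rep q) / δ⌋ := by
      rw [← Int.natCast_floor_eq_floor (div_nonneg (hf _ (hrep p hp).1).1 hδ.le),
        ← Int.natCast_floor_eq_floor (div_nonneg (hf _ (hrep q hq).1).1 hδ.le)]
      exact congrArg _ hpq
    have := Int.abs_sub_lt_one_of_floor_eq_floor hfloor
    rw [← sub_div, abs_div, abs_of_pos hδ, div_lt_one hδ] at this
    linarith
  calc ((π '' s).ncard : ℝ) ≤ (⌊M / δ⌋₊ + 1 : ℕ) := by
        exact_mod_cast (ncard_le_ncard_of_injOn g hmaps hinj).trans_eq (by simp)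
    _ ≤ M / δ + 1 := by push_cast; gcongr; exact Nat.floor_le (by positivity)

theorem growth_eq_zero_of_ncard_le {Γ : Set Omega}
    (h : ∀ r : ℝ, 1 < r → ∃ C : ℝ, ∀ n : ℕ, ((initSegs Γ n).ncard : ℝ) ≤ C * r ^ n) :
    growth Γ = 0 := by
  refine Tendsto.limsup_eq (tendsto_order.2 ⟨fun ε hε => Eventually.of_forall fun n =>
    hε.trans_le (div_nonneg (Real.log_natCast_nonneg _) n.cast_nonneg), fun ε hε => ?_⟩)
  obtain ⟨C, hC⟩ := h (Real.exp (ε / 2)) (Real.one_lt_exp_iff.2 (half_pos hε))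
  have hlim : Tendsto (fun n : ℕ => Real.log C / n) atTop (𝓝 0) :=
    tendsto_const_div_atTop_nhds_zero_nat _
  filter_upwards [hlim.eventually_lt_const (half_pos hε), eventually_ge_atTop 1] with n hn hn1
  have hn0 : (0 : ℝ) < n := by exact_mod_cast hn1
  rcases Nat.eq_zero_or_pos (initSegs Γ n).ncard with h0 | hpos
  · simpa [h0] using hε
  have hpos' : (0 : ℝ) < (initSegs Γ n).ncard := by exact_mod_cast hpos
  have hCpos : 0 < C := pos_of_mul_pos_left (hpos'.trans_le (hC n)) (by positivity)
  have hlog : Real.log (initSegs Γ n).ncard ≤ Real.log C + n * (ε / 2) := by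
    calc _ ≤ Real.log (C * Real.exp (ε / 2) ^ n) := Real.log_le_log hpos' (hC n)
      _ = _ := by rw [Real.log_mul hCpos.ne' (by positivity), Real.log_pow, Real.log_exp]
  rw [div_lt_iff₀ hn0] at hn ⊢
  linarith

theorem mapsTo_shift_omegaUnion (α β : Omega) :
    MapsTo shift (OmegaUnion α β) (OmegaUnion α β) := by
  rintro ω (h | h)
  · exact Or.inl fun n => by rw [← Function.iterate_succ_apply]; exact h (n + 1)
  · exact Or.inr fun n => by rw [← Function.iterate_succ_apply]; exact h (n + 1)

namespace Admissible

variable {α β ω : Omega} {x y : ℝ}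

theorem left_mem (hadm : Admissible α β) : α ∈ OmegaUnion α β := Or.inl hadm.2.2.2.2.1

theorem right_mem (hadm : Admissible α β) : β ∈ OmegaUnion α β := Or.inr hadm.2.2.2.2.2

theorem le_left_of_head_false (hadm : Admissible α β) (hω : ω ∈ OmegaUnion α β)
    (h : ω 0 = false) : toLex ω ≤ toLex α := by
  have hωβ : toLex ω < toLex β := toLex_lt_of_head h hadm.2.2.1
  rcases hω with hω | hω
  · exact not_lt.mp fun hαω => hω 0 ⟨hαω, lexLe_iff_toLex_le.2 hωβ.le⟩
  · exact (not_le.mp fun hαω => hω 0 ⟨lexLe_iff_toLex_le.2 hαω, hωβ⟩).le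

theorem right_le_of_head_true (hadm : Admissible α β) (hω : ω ∈ OmegaUnion α β)
    (h : ω 0 = true) : toLex β ≤ toLex ω := by
  have hαω : toLex α < toLex ω := toLex_lt_of_head hadm.1 h
  rcases hω with hω | hω
  · exact (not_le.mp fun hωβ => hω 0 ⟨hαω, lexLe_iff_toLex_le.2 hωβ⟩).le
  · exact not_lt.mp fun hωβ => hω 0 ⟨lexLe_iff_toLex_le.2 hαω.le, hωβ⟩

theorem headGap_of_headGap_zero (hadm : Admissible α β) (hx0 : 0 ≤ x) (hx1 : x < 1)
    (h : HeadGap (OmegaUnion α β) x 0) :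
    HeadGap (OmegaUnion α β) x (bitSeries x β - bitSeries x α) := fun u hu v hv hu0 hv0 => by
  have hΓ := mapsTo_shift_omegaUnion α β
  linarith [h.bitSeries_le hx0 hx1 hΓ hu hadm.left_mem (hadm.le_left_of_head_false hu hu0),
    h.bitSeries_le hx0 hx1 hΓ hadm.right_mem hv (hadm.right_le_of_head_true hv hv0)]

/-- Continuous induction from `x = 1/2`: the head gap at `y` is at least `F(y) > 0`, so it stays
nonnegative slightly beyond `y`. -/
theorem headGap_zero_of_gap_pos (hadm : Admissible α β)
    (hF : ∀ y ∈ Ico (1 / 2 : ℝ) 1, 0 < bitSeries y β - bitSeries y α)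
    (hx : x ∈ Ico (1 / 2 : ℝ) 1) : HeadGap (OmegaUnion α β) x 0 := by
  refine IsClosed.Icc_subset_of_forall_mem_nhdsWithin
    (isClosed_setOf_headGap_zero_inter (by norm_num) hx.2)
    (headGap_zero_of_le_half (by norm_num) le_rfl) ?_ ⟨hx.1, le_rfl⟩
  rintro y ⟨hy, hyI⟩
  have hy1 : y < 1 := hyI.2.trans hx.2
  have hy0 : 0 ≤ y := by linarith [hyI.1]
  have hcont : ContinuousAt (fun z => (1 - z)⁻¹ - (1 - y)⁻¹) y :=
    ((continuousAt_const.sub continuousAt_id).inv₀ (sub_ne_zero.2 hy1.ne')).sub continuousAt_const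
  have hev : ∀ᶠ z in 𝓝 y, z < 1 ∧ (1 - z)⁻¹ - (1 - y)⁻¹ < bitSeries y β - bitSeries y α :=
    Filter.Eventually.and (Iio_mem_nhds hy1)
      (hcont.eventually_lt continuousAt_const (by simpa using hF y ⟨hyI.1, hy1⟩))
  filter_upwards [nhdsWithin_le_nhds hev, self_mem_nhdsWithin] with z ⟨hz1, hz⟩ (hyz : y < z)
  intro u hu v hv hu0 hv0
  have := (hadm.headGap_of_headGap_zero hy0 hy1 hy).of_le hy0 hyz.le hz1 u hu v hv hu0 hv0
  linarith

theorem ncard_initSegs_le (hadm : Admissible α β)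
    (hF : ∀ y ∈ Ico (1 / 2 : ℝ) 1, 0 < bitSeries y β - bitSeries y α)
    (hy : y ∈ Ico (1 / 2 : ℝ) 1) (n : ℕ) :
    ((initSegs (OmegaUnion α β) n).ncard : ℝ) ≤
      ((1 - y)⁻¹ / (bitSeries y β - bitSeries y α) + 1) * y⁻¹ ^ n := by
  have hy0 : 0 < y := by linarith [hy.1]
  have hF0 := hF y hy
  have hgap := hadm.headGap_of_headGap_zero hy0.le hy.2 (hadm.headGap_zero_of_gap_pos hF hy)
  have hpack := ncard_image_le_of_separated (s := OmegaUnion α β) (fun ω (i : Fin n) => ω i)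
    (bitSeries y) (inv_nonneg.2 (by linarith [hy.2])) (mul_pos (pow_pos hy0 n) hF0)
    (fun a _ => ⟨bitSeries_nonneg hy0.le a, bitSeries_le hy0.le hy.2 a⟩)
    fun a ha b hb hne => by
      obtain ⟨i, hi⟩ := Function.ne_iff.mp hne
      exact hgap.pow_mul_le_abs_sub hy0.le hy.2 (mapsTo_shift_omegaUnion α β) hF0.le ha hb i.2 hi
  have hpow : 1 ≤ y⁻¹ ^ n := one_le_pow₀ ((one_le_inv₀ hy0).2 hy.2.le)
  have e : (1 - y)⁻¹ / (y ^ n * (bitSeries y β - bitSeries y α)) =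
      (1 - y)⁻¹ / (bitSeries y β - bitSeries y α) * y⁻¹ ^ n := by
    rw [inv_pow]; field_simp
  rw [add_mul, one_mul]
  exact hpack.trans (by rw [e]; linarith)

theorem growth_eq_zero (hadm : Admissible α β)
    (hF : ∀ y ∈ Ico (1 / 2 : ℝ) 1, 0 < bitSeries y β - bitSeries y α) :
    growth (OmegaUnion α β) = 0 := by
  refine growth_eq_zero_of_ncard_le fun r hr => ?_
  set y := max (1 / 2 : ℝ) r⁻¹
  have hy : y ∈ Ico (1 / 2 : ℝ) 1 :=
    ⟨le_max_left _ _, max_lt (by norm_num) (inv_lt_one_of_one_lt₀ hr)⟩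
  have hyr : y⁻¹ ≤ r := inv_le_of_inv_le₀ (by positivity) (le_max_right _ _)
  have hC : 0 ≤ (1 - y)⁻¹ / (bitSeries y β - bitSeries y α) + 1 :=
    add_nonneg (div_nonneg (inv_nonneg.2 (by linarith [hy.2])) (hF y hy).le) zero_le_one
  exact ⟨_, fun n => (hadm.ncard_initSegs_le hF hy n).trans (by gcongr)⟩

theorem exists_seriesEq_of_gap_nonpos (hadm : Admissible α β) (hy : y ∈ Ico (1 / 2 : ℝ) 1)
    (h : bitSeries y β - bitSeries y α ≤ 0) : ∃ x ∈ Icc (1 / 2 : ℝ) y, seriesEq α β x := by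
  have h0 : 0 ≤ bitSeries (1 / 2) β - bitSeries (1 / 2) α :=
    headGap_zero_of_le_half (by norm_num) le_rfl α hadm.left_mem β hadm.right_mem hadm.1 hadm.2.2.1
  have hcont : ContinuousOn (fun x => bitSeries x β - bitSeries x α) (Icc (1 / 2) y) :=
    ((continuousOn_bitSeries hy.2 β).sub (continuousOn_bitSeries hy.2 α)).mono
      (Icc_subset_Icc_left (by norm_num))
  obtain ⟨x, hx, hx0⟩ := intermediate_value_Icc' hy.1 hcont ⟨h, h0⟩
  exact ⟨x, hx, (sub_eq_zero.mp hx0).symm⟩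

end Admissible

/-- For an admissible non-null pair `(α,β)` there is `x ∈ [1/2,1)` with
`Σ α_n x^n = Σ β_n x^n`. -/
theorem stmt_0 (α β : Omega) (hadm : Admissible α β)
    (hnonnull : growth (OmegaUnion α β) ≠ 0) :
    ∃ x : ℝ, 1/2 ≤ x ∧ x < 1 ∧ seriesEq α β x := by
  by_contra hno
  refine hnonnull (hadm.growth_eq_zero fun y hy => ?_)
  by_contra! hy0
  obtain ⟨x, hx, hαβ⟩ := hadm.exists_seriesEq_of_gap_nonpos hy hy0
  exact hno ⟨x, hx.1, hx.2.trans_lt hy.2, hαβ⟩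
end

section
/- Let B and p be real numbers with 1 < B ≤ 2, b := 1/B, and 1−b ≤ p ≤ b. Then for every y ∈ [0,1], π_b(τ̂_{(B,p,−)}(y)) = y and π_b(τ̂_{(B,p,+)}(y)) = y; that is, both itinerary maps are sections of the projection map π_b. -/
open scoped Classical

/-- The map `f_{(B,p,−)}`. -/
noncomputable def fMinus (B p : ℝ) : ℝ → ℝ :=
  fun x => if x ≤ p then B * x else B * x + 1 - B

/-- The map `f_{(B,p,+)}`. -/
noncomputable def fPlus (B p : ℝ) : ℝ → ℝ :=
  fun x => if x < p then B * x else B * x + 1 - B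

/-- The itinerary map `τ̂_{(B,p,−)}`. -/
noncomputable def itinMinus (B p : ℝ) (y : ℝ) : Omega :=
  fun k => if p < (fMinus B p)^[k] y then true else false

/-- The itinerary map `τ̂_{(B,p,+)}`. -/
noncomputable def itinPlus (B p : ℝ) (y : ℝ) : Omega :=
  fun k => if p ≤ (fPlus B p)^[k] y then true else false

/-!
Each map `f = f_{(B,p,±)}` sends `[0,1]` into itself (this is where `1 - b ≤ p ≤ b` enters), and
on either branch `z = (1 - b)·ω₀ + b·f(z)`, with `ω₀` the first digit of the itinerary of `z`.
Iterating along the orbit `x_n = fⁿ(y)` gives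
`y = (1 - b) Σ_{k<n} ω_k b^k + bⁿ x_n`, and the remainder tends to `0` since `x_n` stays bounded.
-/

open Set Filter Topology

theorem proj_eq_of_expansion {b C : ℝ} (hb0 : 0 ≤ b) (hb1 : b < 1) {ω : Omega} {x : ℕ → ℝ}
    (hx : ∀ n, |x n| ≤ C)
    (hstep : ∀ n, x n = (1 - b) * (if ω n then 1 else 0) + b * x (n + 1)) :
    proj b ω = x 0 := by
  set g : ℕ → ℝ := fun k => (1 - b) * ((if ω k then 1 else 0) * b ^ k)
  have hg : ∀ k, 0 ≤ g k := fun k =>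
    mul_nonneg (by linarith) (mul_nonneg (by split_ifs <;> norm_num) (pow_nonneg hb0 k))
  have partial_sum : ∀ n, ∑ k ∈ Finset.range n, g k = x 0 - b ^ n * x n := by
    intro n
    induction n with
    | zero => simp
    | succ n ih =>
      rw [Finset.sum_range_succ, ih, pow_succ]
      linear_combination -b ^ n * hstep n
  have tail : Tendsto (fun n => b ^ n * x n) atTop (𝓝 0) := by
    refine squeeze_zero_norm (fun n => ?_)
      (by simpa using (tendsto_pow_atTop_nhds_zero_of_lt_one hb0 hb1).mul_const C)
    rw [norm_mul, Real.norm_of_nonneg (pow_nonneg hb0 n), Real.norm_eq_abs]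
    exact mul_le_mul_of_nonneg_left (hx n) (pow_nonneg hb0 n)
  have hsum : HasSum g (x 0) := by
    refine (hasSum_iff_tendsto_nat_of_nonneg hg _).2 ?_
    simp_rw [partial_sum]
    simpa using tendsto_const_nhds.sub tail
  rw [proj, ← tsum_mul_left, hsum.tsum_eq]

theorem proj_itinerary_eq {b : ℝ} (hb0 : 0 ≤ b) (hb1 : b < 1) {f : ℝ → ℝ} {s : ℝ → Bool}
    (hf : MapsTo f (Icc 0 1) (Icc 0 1))
    (hexp : ∀ z, z = (1 - b) * (if s z then 1 else 0) + b * f z)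
    {y : ℝ} (hy : y ∈ Icc 0 1) :
    proj b (fun k => s (f^[k] y)) = y := by
  refine proj_eq_of_expansion (C := 1) (x := fun n => f^[n] y) hb0 hb1 (fun n => ?_) (fun n => ?_)
  · obtain ⟨h0, h1⟩ := hf.iterate n hy
    exact abs_le.2 ⟨by linarith, h1⟩
  · rw [Function.iterate_succ_apply']
    exact hexp _

section ExpandingMaps

variable {B p b z : ℝ}

theorem mul_mem_Icc_of_le (hB : 0 ≤ B) (hbB : b * B = 1) (hz : z ∈ Icc (0 : ℝ) 1) (hzb : z ≤ b) :
    B * z ∈ Icc (0 : ℝ) 1 :=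
  ⟨mul_nonneg hB hz.1, by nlinarith⟩

theorem mul_add_one_sub_mem_Icc_of_ge (hB : 0 ≤ B) (hbB : b * B = 1) (hz : z ∈ Icc (0 : ℝ) 1)
    (hzb : 1 - b ≤ z) : B * z + 1 - B ∈ Icc (0 : ℝ) 1 :=
  ⟨by nlinarith, by nlinarith [hz.2]⟩

theorem fMinus_mapsTo (hB : 0 ≤ B) (hbB : b * B = 1) (hp1 : 1 - b ≤ p) (hp2 : p ≤ b) :
    MapsTo (fMinus B p) (Icc 0 1) (Icc 0 1) := fun z hz => by
  unfold fMinus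
  split_ifs with hzp
  · exact mul_mem_Icc_of_le hB hbB hz (hzp.trans hp2)
  · exact mul_add_one_sub_mem_Icc_of_ge hB hbB hz (hp1.trans (not_le.1 hzp).le)

theorem fPlus_mapsTo (hB : 0 ≤ B) (hbB : b * B = 1) (hp1 : 1 - b ≤ p) (hp2 : p ≤ b) :
    MapsTo (fPlus B p) (Icc 0 1) (Icc 0 1) := fun z hz => by
  unfold fPlus
  split_ifs with hzp
  · exact mul_mem_Icc_of_le hB hbB hz (hzp.le.trans hp2)
  · exact mul_add_one_sub_mem_Icc_of_ge hB hbB hz (hp1.trans (not_lt.1 hzp))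

theorem fMinus_expansion (hbB : b * B = 1) (z : ℝ) :
    z = (1 - b) * (if p < z then 1 else 0) + b * fMinus B p z := by
  unfold fMinus
  by_cases h : z ≤ p
  · rw [if_pos h, if_neg h.not_gt]; linear_combination -z * hbB
  · rw [if_neg h, if_pos (not_le.1 h)]; linear_combination (1 - z) * hbB

theorem fPlus_expansion (hbB : b * B = 1) (z : ℝ) :
    z = (1 - b) * (if p ≤ z then 1 else 0) + b * fPlus B p z := by
  unfold fPlus
  by_cases h : z < p
  · rw [if_pos h, if_neg h.not_ge]; linear_combination -z * hbB
  · rw [if_neg h, if_pos (not_lt.1 h)]; linear_combination (1 - z) * hbB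

end ExpandingMaps

theorem stmt_9_general (B p b : ℝ) (hB1 : 1 < B) (hb : b = 1 / B)
    (hp1 : 1 - b ≤ p) (hp2 : p ≤ b) :
    ∀ y ∈ Set.Icc (0 : ℝ) 1,
      proj b (itinMinus B p y) = y ∧ proj b (itinPlus B p y) = y := by
  have hB0 : 0 ≤ B := by linarith
  have hbB : b * B = 1 := by rw [hb]; field_simp
  have hb0 : 0 ≤ b := by rw [hb]; positivity
  have hb1 : b < 1 := by rw [hb, div_lt_one (by linarith)]; exact hB1
  intro y hy
  exact ⟨proj_itinerary_eq (s := fun z => if p < z then true else false) hb0 hb1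
      (fMinus_mapsTo hB0 hbB hp1 hp2) (fun z => by simpa using fMinus_expansion hbB z) hy,
    proj_itinerary_eq (s := fun z => if p ≤ z then true else false) hb0 hb1
      (fPlus_mapsTo hB0 hbB hp1 hp2) (fun z => by simpa using fPlus_expansion hbB z) hy⟩

/-- For `1 < B ≤ 2`, `b = 1/B` and `1 − b ≤ p ≤ b`, both itinerary maps
are sections of `π_b`: for every `y ∈ [0,1]`, `π_b(τ̂_{(B,p,−)}(y)) = y` and
`π_b(τ̂_{(B,p,+)}(y)) = y`. -/
theorem stmt_9 (B p b : ℝ) (hB1 : 1 < B) (hB2 : B ≤ 2) (hb : b = 1 / B)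
    (hp1 : 1 - b ≤ p) (hp2 : p ≤ b) :
    ∀ y ∈ Set.Icc (0 : ℝ) 1,
      proj b (itinMinus B p y) = y ∧ proj b (itinPlus B p y) = y :=
  stmt_9_general B p b hB1 hb hp1 hp2
end

section
/- Let B be a real number with 1 < B < 2, let b := 1/B, and let p be any real number with 1−b ≤ p ≤ b. Let α_p := τ̂_{(B,p,−)}(p) and β_p := τ̂_{(B,p,+)}(p) be the itineraries of the point p. Then (α_p, β_p) is an admissible non-null pair, and π_b(α_p) = π_b(β_p) = p. -/
open scoped Classical

section Aux

open Filter Set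

lemma lexLt_irrefl (ω : Omega) : ¬ lexLt ω ω := by
  rintro ⟨k, -, hk⟩; exact lt_irrefl _ hk

lemma lexLt_asymm {σ ω : Omega} (h1 : lexLt σ ω) (h2 : lexLt ω σ) : False := by
  obtain ⟨k, hk1, hk2⟩ := h1
  obtain ⟨m, hm1, hm2⟩ := h2
  rcases lt_trichotomy k m with h | h | h
  · rw [hm1 k h] at hk2; exact lt_irrefl _ hk2
  · subst h; exact absurd hk2 (lt_asymm hm2)
  · rw [hk1 m h] at hm2; exact lt_irrefl _ hm2

lemma not_lexLe_of_lexLt {σ ω : Omega} (h : lexLt σ ω) : ¬ lexLe ω σ := by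
  rintro (h2 | rfl)
  · exact lexLt_asymm h h2
  · exact lexLt_irrefl _ h

lemma not_lexLt_of_lexLe {σ ω : Omega} (h : lexLe σ ω) : ¬ lexLt ω σ := by
  rcases h with h | rfl
  · exact fun h2 => lexLt_asymm h h2
  · exact lexLt_irrefl _

lemma shift_iter (ω : Omega) (n k : ℕ) : (shift^[n] ω) k = ω (k + n) := by
  induction n generalizing ω k with
  | zero => rfl
  | succ n ih =>
    rw [Function.iterate_succ_apply, ih (shift ω) k]
    rfl

lemma itin_shift (f : ℝ → ℝ) (q : ℝ → Bool) (n : ℕ) (y : ℝ) :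
    shift^[n] (fun k => q (f^[k] y)) = fun k => q (f^[k] (f^[n] y)) := by
  funext k
  rw [shift_iter]
  simp only [← Function.iterate_add_apply]

lemma itin_mono (f : ℝ → ℝ) (q : ℝ → Bool)
    (h1 : ∀ u v : ℝ, u ≤ v → q u = q v → f u ≤ f v)
    (h2 : ∀ u v : ℝ, u ≤ v → q u = true → q v = false → False)
    {x y : ℝ} (hxy : x ≤ y) :
    lexLe (fun k => q (f^[k] x)) (fun k => q (f^[k] y)) := by
  have aux : ∀ k : ℕ, (∀ i, i < k → q (f^[i] x) = q (f^[i] y)) → f^[k] x ≤ f^[k] y := by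
    intro k
    induction k with
    | zero => intro _; simpa using hxy
    | succ k ih =>
      intro h
      rw [Function.iterate_succ_apply', Function.iterate_succ_apply']
      exact h1 _ _ (ih fun i hi => h i (hi.trans (Nat.lt_succ_self k))) (h k (Nat.lt_succ_self k))
  by_cases heq : (fun k => q (f^[k] x)) = (fun k => q (f^[k] y))
  · exact Or.inr heq
  · left
    have hex : ∃ k, q (f^[k] x) ≠ q (f^[k] y) := by
      by_contra hc
      push_neg at hc
      exact heq (funext fun k => hc k)
    classical
    refine ⟨Nat.find hex, fun i hi => ?_, ?_⟩
    · have := Nat.find_min hex hi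
      simpa using this
    · have hne := Nat.find_spec hex
      have hle : f^[Nat.find hex] x ≤ f^[Nat.find hex] y :=
        aux _ (fun i hi => by simpa using Nat.find_min hex hi)
      cases hbx : q (f^[Nat.find hex] x) <;> cases hby : q (f^[Nat.find hex] y)
      · exact absurd (hbx.trans hby.symm) hne
      · simp only []; rw [hbx, hby]; exact Bool.false_lt_true
      · exact absurd (h2 _ _ hle hbx hby) not_false
      · exact absurd (hbx.trans hby.symm) hne

lemma itin_strict (f g : ℝ → ℝ) (q r : ℝ → Bool)
    (h1 : ∀ u v : ℝ, u < v → q u = r v → f u < g v)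
    (h2 : ∀ u v : ℝ, u < v → q u = true → r v = false → False)
    {x y : ℝ}
    (hne : (fun k => q (f^[k] x)) ≠ (fun k => r (g^[k] y)))
    (hxy : x < y) :
    lexLt (fun k => q (f^[k] x)) (fun k => r (g^[k] y)) := by
  have aux : ∀ k : ℕ, (∀ i, i < k → q (f^[i] x) = r (g^[i] y)) → f^[k] x < g^[k] y := by
    intro k
    induction k with
    | zero => intro _; simpa using hxy
    | succ k ih =>
      intro h
      rw [Function.iterate_succ_apply', Function.iterate_succ_apply']
      exact h1 _ _ (ih fun i hi => h i (hi.trans (Nat.lt_succ_self k))) (h k (Nat.lt_succ_self k))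
  have hex : ∃ k, q (f^[k] x) ≠ r (g^[k] y) := by
    by_contra hc
    push_neg at hc
    exact hne (funext fun k => hc k)
  classical
  refine ⟨Nat.find hex, fun i hi => by simpa using Nat.find_min hex hi, ?_⟩
  have hne' := Nat.find_spec hex
  have hlt : f^[Nat.find hex] x < g^[Nat.find hex] y :=
    aux _ (fun i hi => by simpa using Nat.find_min hex hi)
  cases hbx : q (f^[Nat.find hex] x) <;> cases hby : r (g^[Nat.find hex] y)
  · exact absurd (hbx.trans hby.symm) hne'
  · simp only []; rw [hbx, hby]; exact Bool.false_lt_true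
  · exact absurd (h2 _ _ hlt hbx hby) not_false
  · exact absurd (hbx.trans hby.symm) hne'

end Aux

section Aux2

open Filter Set

lemma iter_mem (f : ℝ → ℝ) (hinv : ∀ u ∈ Set.Icc (0:ℝ) 1, f u ∈ Set.Icc (0:ℝ) 1)
    {y : ℝ} (hy : y ∈ Set.Icc (0:ℝ) 1) (n : ℕ) : f^[n] y ∈ Set.Icc (0:ℝ) 1 := by
  induction n with
  | zero => simpa using hy
  | succ n ih => rw [Function.iterate_succ_apply']; exact hinv _ ih

lemma proj_itin {b : ℝ} (hb0 : 0 < b) (hb1 : b < 1)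
    (f : ℝ → ℝ) (q : ℝ → Bool)
    (hstep : ∀ u : ℝ, u - b * f u = (1 - b) * (if q u then 1 else 0))
    (hinv : ∀ u ∈ Set.Icc (0:ℝ) 1, f u ∈ Set.Icc (0:ℝ) 1)
    {y : ℝ} (hy : y ∈ Set.Icc (0:ℝ) 1) :
    proj b (fun k => q (f^[k] y)) = y := by
  have hpartial : ∀ n : ℕ,
      ∑ k ∈ Finset.range n, (1 - b) * ((if q (f^[k] y) then (1:ℝ) else 0) * b ^ k)
        = y - b ^ n * f^[n] y := by
    intro n
    induction n with
    | zero => simp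
    | succ n ih =>
      rw [Finset.sum_range_succ, ih, Function.iterate_succ_apply']
      have h := hstep (f^[n] y)
      push_cast
      ring_nf
      ring_nf at h
      nlinarith [h, pow_pos hb0 n]
  have hiter := iter_mem f hinv hy
  have htend0 : Filter.Tendsto (fun n : ℕ => b ^ n * f^[n] y) Filter.atTop (nhds 0) := by
    have hpow : Filter.Tendsto (fun n : ℕ => b ^ n) Filter.atTop (nhds 0) :=
      tendsto_pow_atTop_nhds_zero_of_lt_one hb0.le hb1
    apply squeeze_zero (fun n => mul_nonneg (pow_nonneg hb0.le n) (hiter n).1)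
      (fun n => ?_) hpow
    calc b ^ n * f^[n] y ≤ b ^ n * 1 :=
          mul_le_mul_of_nonneg_left (hiter n).2 (pow_nonneg hb0.le n)
      _ = b ^ n := mul_one _
  have htend : Filter.Tendsto
      (fun n : ℕ => ∑ k ∈ Finset.range n, (1 - b) * ((if q (f^[k] y) then (1:ℝ) else 0) * b ^ k))
      Filter.atTop (nhds y) := by
    simp only [hpartial]
    have := Filter.Tendsto.const_sub y htend0
    simpa using this
  have hsum : HasSum (fun k : ℕ => (1 - b) * ((if q (f^[k] y) then (1:ℝ) else 0) * b ^ k)) y := by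
    rw [hasSum_iff_tendsto_nat_of_nonneg (fun i => mul_nonneg (by linarith) (mul_nonneg (by split <;> norm_num) (pow_nonneg hb0.le i)))]
    exact htend
  have := hsum.tsum_eq
  rw [proj]
  rw [tsum_mul_left] at this
  exact this

end Aux2

section Aux3

open Filter Set

/-- The bit function for the minus itinerary. -/
noncomputable def qMin (p : ℝ) : ℝ → Bool := fun u => if p < u then true else false

/-- The bit function for the plus itinerary. -/
noncomputable def qPlu (p : ℝ) : ℝ → Bool := fun u => if p ≤ u then true else false

lemma itinMinus_eq (B p y : ℝ) :
    itinMinus B p y = fun k => qMin p ((fMinus B p)^[k] y) := rfl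

lemma itinPlus_eq (B p y : ℝ) :
    itinPlus B p y = fun k => qPlu p ((fPlus B p)^[k] y) := rfl

variable {B b p : ℝ}

lemma hmono_m1 (hB1 : 1 < B) :
    ∀ u v : ℝ, u ≤ v → qMin p u = qMin p v → fMinus B p u ≤ fMinus B p v := by
  intro u v huv hq
  unfold qMin at hq
  unfold fMinus
  split_ifs at hq ⊢ <;> simp_all <;> nlinarith

lemma hmono_m2 : ∀ u v : ℝ, u ≤ v → qMin p u = true → qMin p v = false → False := by
  intro u v huv h1 h2
  unfold qMin at h1 h2
  split_ifs at h1 h2 <;> simp_all <;> linarith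

lemma hmono_p1 (hB1 : 1 < B) :
    ∀ u v : ℝ, u ≤ v → qPlu p u = qPlu p v → fPlus B p u ≤ fPlus B p v := by
  intro u v huv hq
  unfold qPlu at hq
  unfold fPlus
  split_ifs at hq ⊢ <;> simp_all <;> nlinarith

lemma hmono_p2 : ∀ u v : ℝ, u ≤ v → qPlu p u = true → qPlu p v = false → False := by
  intro u v huv h1 h2
  unfold qPlu at h1 h2
  split_ifs at h1 h2 <;> simp_all <;> linarith

lemma hmix1 (hB1 : 1 < B) :
    ∀ u v : ℝ, u < v → qPlu p u = qMin p v → fPlus B p u < fMinus B p v := by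
  intro u v huv hq
  unfold qPlu qMin at hq
  unfold fPlus fMinus
  split_ifs at hq ⊢ <;> simp_all <;> nlinarith

lemma hmix2 : ∀ u v : ℝ, u < v → qPlu p u = true → qMin p v = false → False := by
  intro u v huv h1 h2
  unfold qPlu at h1
  unfold qMin at h2
  split_ifs at h1 h2 <;> simp_all <;> linarith

lemma hstep_m (hb : b = 1 / B) (hB1 : 1 < B) :
    ∀ u : ℝ, u - b * fMinus B p u = (1 - b) * (if qMin p u then 1 else 0) := by
  intro u
  have hB0 : B ≠ 0 := by positivity
  have hbB : b * B = 1 := by rw [hb]; field_simp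
  unfold qMin fMinus
  split_ifs <;>
    first
      | linarith
      | linear_combination (1 - u) * hbB
      | linear_combination (-u) * hbB
      | simp_all

lemma hstep_p (hb : b = 1 / B) (hB1 : 1 < B) :
    ∀ u : ℝ, u - b * fPlus B p u = (1 - b) * (if qPlu p u then 1 else 0) := by
  intro u
  have hB0 : B ≠ 0 := by positivity
  have hbB : b * B = 1 := by rw [hb]; field_simp
  unfold qPlu fPlus
  split_ifs <;>
    first
      | linarith
      | linear_combination (1 - u) * hbB
      | linear_combination (-u) * hbB
      | simp_all

lemma hinv_m (hB1 : 1 < B) (hb : b = 1 / B) (hp1 : 1 - b ≤ p) (hp2 : p ≤ b) :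
    ∀ u ∈ Set.Icc (0:ℝ) 1, fMinus B p u ∈ Set.Icc (0:ℝ) 1 := by
  intro u ⟨hu0, hu1⟩
  have hB0 : (0:ℝ) < B := by linarith
  have hbB : b * B = 1 := by rw [hb]; field_simp
  unfold fMinus
  constructor <;> split_ifs <;> nlinarith

lemma hinv_p (hB1 : 1 < B) (hb : b = 1 / B) (hp1 : 1 - b ≤ p) (hp2 : p ≤ b) :
    ∀ u ∈ Set.Icc (0:ℝ) 1, fPlus B p u ∈ Set.Icc (0:ℝ) 1 := by
  intro u ⟨hu0, hu1⟩
  have hB0 : (0:ℝ) < B := by linarith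
  have hbB : b * B = 1 := by rw [hb]; field_simp
  unfold fPlus
  constructor <;> split_ifs <;> nlinarith

lemma hbranch_m : ∀ u v : ℝ, qMin p u = qMin p v →
    fMinus B p u - fMinus B p v = B * (u - v) := by
  intro u v hq
  unfold qMin at hq
  unfold fMinus
  split_ifs at hq ⊢ <;>
    first
      | linarith
      | simp_all
      | ring
      | (simp_all; ring)

end Aux3

section Aux4

open Filter Set

lemma itin_expand {B : ℝ} (hB1 : 1 < B) (f : ℝ → ℝ) (q : ℝ → Bool)
    (hbranch : ∀ u v : ℝ, q u = q v → f u - f v = B * (u - v))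
    (hinv : ∀ u ∈ Set.Icc (0:ℝ) 1, f u ∈ Set.Icc (0:ℝ) 1)
    {x y : ℝ} (hx : x ∈ Set.Icc (0:ℝ) 1) (hy : y ∈ Set.Icc (0:ℝ) 1) (n : ℕ)
    (hpref : ∀ i, i < n → q (f^[i] x) = q (f^[i] y)) :
    |x - y| ≤ (1 / B) ^ n := by
  have hB0 : (0:ℝ) < B := by linarith
  have aux : f^[n] x - f^[n] y = B ^ n * (x - y) := by
    clear hx hy
    induction n with
    | zero => simp
    | succ n ih =>
      rw [Function.iterate_succ_apply', Function.iterate_succ_apply',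
        hbranch _ _ (hpref n (Nat.lt_succ_self n)),
        ih (fun i hi => hpref i (hi.trans (Nat.lt_succ_self n)))]
      ring
  have hxn := iter_mem f hinv hx n
  have hyn := iter_mem f hinv hy n
  have h1 : |f^[n] x - f^[n] y| ≤ 1 := by
    rw [abs_le]; constructor <;> [linarith [hxn.1, hyn.2]; linarith [hxn.2, hyn.1]]
  rw [aux, abs_mul, abs_of_pos (pow_pos hB0 n)] at h1
  rw [div_pow, one_pow, le_div_iff₀ (pow_pos hB0 n)]
  linarith

end Aux4

/-- For `1 < B < 2`, `b = 1/B`, and any `p` with `1 − b ≤ p ≤ b`, the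
itineraries `α_p = τ̂_{(B,p,−)}(p)` and `β_p = τ̂_{(B,p,+)}(p)` form an admissible
non-null pair, and `π_b(α_p) = π_b(β_p) = p`. -/
theorem stmt_11 (B b p : ℝ) (hB1 : 1 < B) (hB2 : B < 2) (hb : b = 1 / B)
    (hp1 : 1 - b ≤ p) (hp2 : p ≤ b) :
    Admissible (itinMinus B p p) (itinPlus B p p) ∧
    growth (OmegaUnion (itinMinus B p p) (itinPlus B p p)) ≠ 0 ∧
    proj b (itinMinus B p p) = p ∧ proj b (itinPlus B p p) = p := by
  have hB0 : (0:ℝ) < B := by linarith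
  have hbB : b * B = 1 := by rw [hb]; field_simp
  have hb0 : 0 < b := by rw [hb]; positivity
  have hb1 : b < 1 := by rw [hb, div_lt_one hB0]; exact hB1
  have hp0 : 0 < p := by linarith
  have hplt1 : p < 1 := by linarith
  have hpIcc : p ∈ Set.Icc (0:ℝ) 1 := ⟨by linarith, by linarith⟩
  have projM : ∀ y ∈ Set.Icc (0:ℝ) 1, proj b (itinMinus B p y) = y := by
    intro y hy
    rw [itinMinus_eq]
    exact proj_itin hb0 hb1 _ _ (hstep_m hb hB1) (hinv_m hB1 hb hp1 hp2) hy
  have projP : ∀ y ∈ Set.Icc (0:ℝ) 1, proj b (itinPlus B p y) = y := by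
    intro y hy
    rw [itinPlus_eq]
    exact proj_itin hb0 hb1 _ _ (hstep_p hb hB1) (hinv_p hB1 hb hp1 hp2) hy
  have monoM : ∀ x y : ℝ, x ≤ y → lexLe (itinMinus B p x) (itinMinus B p y) := by
    intro x y h
    rw [itinMinus_eq, itinMinus_eq]
    exact itin_mono _ _ (hmono_m1 hB1) hmono_m2 h
  have monoP : ∀ x y : ℝ, x ≤ y → lexLe (itinPlus B p x) (itinPlus B p y) := by
    intro x y h
    rw [itinPlus_eq, itinPlus_eq]
    exact itin_mono _ _ (hmono_p1 hB1) hmono_p2 h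
  have strictPM : ∀ x y : ℝ, x ∈ Set.Icc (0:ℝ) 1 → y ∈ Set.Icc (0:ℝ) 1 → x < y →
      lexLt (itinPlus B p x) (itinMinus B p y) := by
    intro x y hx hy hxy
    rw [itinPlus_eq, itinMinus_eq]
    refine itin_strict _ _ _ _ (hmix1 hB1) hmix2 ?_ hxy
    intro hcontra
    have h1 := projP x hx
    have h2 := projM y hy
    rw [itinPlus_eq] at h1
    rw [itinMinus_eq] at h2
    rw [hcontra] at h1
    exact absurd (h1.symm.trans h2) (ne_of_lt hxy)
  have shiftM : ∀ (y : ℝ) (n : ℕ),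
      shift^[n] (itinMinus B p y) = itinMinus B p ((fMinus B p)^[n] y) := by
    intro y n; rw [itinMinus_eq, itin_shift]; rfl
  have shiftP : ∀ (y : ℝ) (n : ℕ),
      shift^[n] (itinPlus B p y) = itinPlus B p ((fPlus B p)^[n] y) := by
    intro y n; rw [itinPlus_eq, itin_shift]; rfl
  have iterM : ∀ y ∈ Set.Icc (0:ℝ) 1, ∀ n : ℕ, (fMinus B p)^[n] y ∈ Set.Icc (0:ℝ) 1 :=
    fun y hy n => iter_mem _ (hinv_m hB1 hb hp1 hp2) hy n
  have iterP : ∀ y ∈ Set.Icc (0:ℝ) 1, ∀ n : ℕ, (fPlus B p)^[n] y ∈ Set.Icc (0:ℝ) 1 :=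
    fun y hy n => iter_mem _ (hinv_p hB1 hb hp1 hp2) hy n
  have memM : ∀ y ∈ Set.Icc (0:ℝ) 1,
      itinMinus B p y ∈ OmegaMinus (itinMinus B p p) (itinPlus B p p) := by
    intro y hy n hn
    obtain ⟨hlt, hle⟩ := hn
    rw [shiftM] at hlt hle
    rcases le_or_gt ((fMinus B p)^[n] y) p with h | h
    · exact not_lexLt_of_lexLe (monoM _ p h) hlt
    · exact not_lexLe_of_lexLt (strictPM p _ hpIcc (iterM y hy n) h) hle
  have memP : ∀ y ∈ Set.Icc (0:ℝ) 1,
      itinPlus B p y ∈ OmegaPlus (itinMinus B p p) (itinPlus B p p) := by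
    intro y hy n hn
    obtain ⟨hle, hlt⟩ := hn
    rw [shiftP] at hlt hle
    rcases le_or_gt p ((fPlus B p)^[n] y) with h | h
    · exact not_lexLt_of_lexLe (monoP p _ h) hlt
    · exact not_lexLe_of_lexLt (strictPM _ p (iterP y hy n) hpIcc h) hle
  have hα0 : itinMinus B p p 0 = false := by
    show (if p < (fMinus B p)^[0] p then true else false) = false
    simp
  have hα1 : itinMinus B p p 1 = true := by
    show (if p < (fMinus B p)^[1] p then true else false) = true
    rw [Function.iterate_one]
    unfold fMinus
    rw [if_pos le_rfl, if_pos (by nlinarith)]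
  have hβ0 : itinPlus B p p 0 = true := by
    show (if p ≤ (fPlus B p)^[0] p then true else false) = true
    simp
  have hβ1 : itinPlus B p p 1 = false := by
    show (if p ≤ (fPlus B p)^[1] p then true else false) = false
    rw [Function.iterate_one]
    unfold fPlus
    rw [if_neg (lt_irrefl p), if_neg (by nlinarith)]
  have hgrow : growth (OmegaUnion (itinMinus B p p) (itinPlus B p p)) ≠ 0 := by
    set Γ := OmegaUnion (itinMinus B p p) (itinPlus B p p) with hΓdef
    have hcard : ∀ n : ℕ, Nat.floor (B ^ n / 2) + 1 ≤ (initSegs Γ n).ncard := by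
      intro n
      have hBn : (0:ℝ) < B ^ n := pow_pos hB0 n
      set M := Nat.floor (B ^ n / 2) with hM
      set t : ℝ := 2 / B ^ n with ht
      have ht0 : 0 < t := by positivity
      have hyIcc : ∀ j : Fin (M + 1), (j : ℝ) * t ∈ Set.Icc (0:ℝ) 1 := by
        intro j
        constructor
        · positivity
        · have hj : ((j : ℕ) : ℝ) ≤ (M : ℝ) := by
            exact_mod_cast Nat.lt_succ_iff.mp j.isLt
          have hMle : (M : ℝ) ≤ B ^ n / 2 := Nat.floor_le (by positivity)
          calc ((j : ℕ) : ℝ) * t ≤ (B ^ n / 2) * t := by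
                apply mul_le_mul_of_nonneg_right (hj.trans hMle) ht0.le
            _ = 1 := by rw [ht]; field_simp
      set g : Fin (M + 1) → (Fin n → Bool) := fun j i => itinMinus B p ((j : ℝ) * t) i with hg
      have hginj : Function.Injective g := by
        intro j j' hjj
        by_contra hne
        have hpref : ∀ i, i < n →
            qMin p ((fMinus B p)^[i] ((j : ℝ) * t)) = qMin p ((fMinus B p)^[i] ((j' : ℝ) * t)) := by
          intro i hi
          have := congrFun hjj ⟨i, hi⟩
          simpa [hg, itinMinus_eq] using this
        have hexp := itin_expand hB1 _ _ hbranch_m (hinv_m hB1 hb hp1 hp2)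
          (hyIcc j) (hyIcc j') n hpref
        have hsep : t ≤ |(j : ℝ) * t - (j' : ℝ) * t| := by
          rw [← sub_mul, abs_mul, abs_of_pos ht0]
          have hne' : (j : ℕ) ≠ (j' : ℕ) := fun h => hne (Fin.ext h)
          have h1 : (1 : ℝ) ≤ |((j : ℕ) : ℝ) - ((j' : ℕ) : ℝ)| := by
            have hint : (1 : ℤ) ≤ |((j : ℕ) : ℤ) - ((j' : ℕ) : ℤ)| :=
              Int.one_le_abs (sub_ne_zero.mpr (by exact_mod_cast hne'))
            have : (((j : ℕ) : ℤ) : ℝ) - (((j' : ℕ) : ℤ) : ℝ) =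
                ((j : ℕ) : ℝ) - ((j' : ℕ) : ℝ) := by push_cast; ring
            calc (1 : ℝ) ≤ |(((j : ℕ) : ℤ) : ℝ) - (((j' : ℕ) : ℤ) : ℝ)| := by
                  rw [← Int.cast_sub, ← Int.cast_abs]; exact_mod_cast hint
              _ = _ := by rw [this]
          nlinarith [abs_nonneg (((j : ℕ) : ℝ) - ((j' : ℕ) : ℝ))]
        have hlt : (1 / B) ^ n < t := by
          rw [div_pow, one_pow, ht, div_lt_div_iff₀ hBn hBn]
          nlinarith
        linarith
      have hsub : Set.range g ⊆ initSegs Γ n := by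
        rintro _ ⟨j, rfl⟩
        exact ⟨itinMinus B p ((j : ℝ) * t), Or.inl (memM _ (hyIcc j)), rfl⟩
      calc M + 1 = Nat.card (Fin (M + 1)) := by simp
        _ = Nat.card (Set.range g) := (Nat.card_range_of_injective hginj).symm
        _ = (Set.range g).ncard := rfl
        _ ≤ (initSegs Γ n).ncard := Set.ncard_le_ncard hsub (Set.toFinite _)
    have hupper : ∀ n : ℕ, Real.log ((initSegs Γ n).ncard) / n ≤ Real.log 2 := by
      intro n
      have hle2 : (initSegs Γ n).ncard ≤ 2 ^ n := by
        calc (initSegs Γ n).ncard ≤ (Set.univ : Set (Fin n → Bool)).ncard :=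
              Set.ncard_le_ncard (Set.subset_univ _) (Set.toFinite _)
          _ = 2 ^ n := by rw [Set.ncard_univ]; simp [Nat.card_eq_fintype_card]
      have hlog : Real.log ((initSegs Γ n).ncard) ≤ n * Real.log 2 := by
        rcases Nat.eq_zero_or_pos (initSegs Γ n).ncard with h | h
        · rw [h]
          simp only [Nat.cast_zero, Real.log_zero]
          positivity
        · calc Real.log ((initSegs Γ n).ncard) ≤ Real.log ((2 : ℝ) ^ n) := by
                apply Real.log_le_log (by exact_mod_cast h)
                exact_mod_cast hle2
            _ = n * Real.log 2 := by rw [Real.log_pow]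
      rcases Nat.eq_zero_or_pos n with hn | hn
      · rw [hn]; simp [Real.log_nonneg one_le_two]
      · rw [div_le_iff₀ (by exact_mod_cast hn : (0:ℝ) < (n : ℝ)), mul_comm]
        exact hlog
    have hc : 0 < Real.log B := Real.log_pos hB1
    have hlower : ∀ᶠ n : ℕ in Filter.atTop,
        Real.log B / 2 ≤ Real.log ((initSegs Γ n).ncard) / n := by
      rw [Filter.eventually_atTop]
      refine ⟨Nat.ceil (2 * Real.log 2 / Real.log B) + 1, fun n hn => ?_⟩
      have hn1 : 1 ≤ n := le_trans (Nat.le_add_left 1 _) hn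
      have hn0 : (0:ℝ) < (n : ℝ) := by exact_mod_cast hn1
      have hceil : 2 * Real.log 2 / Real.log B ≤ (n : ℝ) := by
        have h1 : (Nat.ceil (2 * Real.log 2 / Real.log B) : ℝ) ≤ (n : ℝ) := by
          exact_mod_cast le_trans (Nat.le_succ _) hn
        exact le_trans (Nat.le_ceil _) h1
      have hlog2n : 2 * Real.log 2 ≤ (n : ℝ) * Real.log B := by
        rw [div_le_iff₀ hc] at hceil; linarith
      have hBn2 : (0:ℝ) < B ^ n / 2 := by positivity
      have hcard' : B ^ n / 2 ≤ ((initSegs Γ n).ncard : ℝ) := by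
        have h1 : (B ^ n / 2 : ℝ) < (Nat.floor (B ^ n / 2) : ℝ) + 1 := Nat.lt_floor_add_one _
        have h2 : ((Nat.floor (B ^ n / 2) + 1 : ℕ) : ℝ) ≤ ((initSegs Γ n).ncard : ℝ) := by
          exact_mod_cast hcard n
        push_cast at h2
        linarith
      have hlog : Real.log (B ^ n / 2) ≤ Real.log ((initSegs Γ n).ncard) :=
        Real.log_le_log hBn2 hcard'
      have heq : Real.log (B ^ n / 2) = (n : ℝ) * Real.log B - Real.log 2 := by
        rw [Real.log_div (by positivity) (by norm_num), Real.log_pow]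
      rw [le_div_iff₀ hn0]
      rw [heq] at hlog
      linarith
    have hbound : Filter.IsBoundedUnder (· ≤ ·) Filter.atTop
        (fun n : ℕ => Real.log ((initSegs Γ n).ncard) / (n : ℝ)) :=
      ⟨Real.log 2, Filter.eventually_map.mpr (Filter.Eventually.of_forall hupper)⟩
    have hge : Real.log B / 2 ≤ growth Γ :=
      Filter.le_limsup_of_frequently_le hlower.frequently hbound
    have hpos : 0 < growth Γ := lt_of_lt_of_le (by positivity) hge
    exact ne_of_gt hpos
  exact ⟨⟨hα0, hα1, hβ0, hβ1, memM p hpIcc, memP p hpIcc⟩, hgrow,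
    projM p hpIcc, projP p hpIcc⟩
end

section
/- Let (α,β) be an admissible non-null pair, B = B_{(α,β)}, Γ = Ω^•_{(α,β,−)}, and let π be the radix map π(d) = Σ_{j∈ℤ} d(j)·B^{−j}. For a finite binary string s = s_0 s_1 ⋯ s_N, let T′_s := {π(d) : d ∈ Γ, d(j) = 0 for all j < −N, and d(−N+i) = s_i for 0 ≤ i ≤ N}, and let X := {sup T′_s : s a finite binary string with T′_s ≠ ∅} (each nonempty T′_s is bounded, so the supremum exists). Then for every x ∈ X, also B·x ∈ X; that is, the associated tiling of [0,∞) is self-replicating. -/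
open scoped Classical

/-- The tile `T′_s` for a finite string `s = s_0 ⋯ s_N`: the set of radix values of
decimals `d` in `Γ` with `d(j) = 0` for `j < −N` and `d(−N+i) = s_i` for `0 ≤ i ≤ N`. -/
def tileSet (Γ : Set (ℤ → Bool)) (B : ℝ) (N : ℕ) (s : ℕ → Bool) : Set ℝ :=
  {x : ℝ | ∃ d ∈ Γ, (∀ j : ℤ, j < -(N : ℤ) → d j = false) ∧
    (∀ i : ℕ, i ≤ N → d (-(N : ℤ) + i) = s i) ∧ radixVal B d = x}

/-! Multiplying by `B` shifts a decimal one place to the left, and `Ω^•_{(α,β,−)}` is closed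
under shifts, so `B · T′_s` is the union of the two tiles `T′_{s0}` and `T′_{s1}`. The supremum
of a finite union of bounded sets is the supremum of one of the nonempty ones, hence
`B · sup T′_s = sup T′_{sc}` for some letter `c`. -/

open scoped Pointwise

lemma comp_add_mem_dot {Γ : Set Omega} {d : ℤ → Bool} (hd : d ∈ dot Γ) (k : ℤ) :
    (fun j => d (j + k)) ∈ dot Γ := by
  obtain ⟨m, γ, hγ, h0, hm⟩ := hd
  refine ⟨m - k, γ, hγ, fun j hj => h0 _ (by omega), fun i => ?_⟩
  simpa only [sub_add_cancel, sub_add_eq_add_sub] using hm i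

lemma radixVal_comp_add {B : ℝ} (hB : B ≠ 0) (d : ℤ → Bool) (k : ℤ) :
    radixVal B (fun j => d (j + k)) = B ^ k * radixVal B d := by
  unfold radixVal
  rw [← tsum_mul_left, ← (Equiv.subRight k).tsum_eq]
  congr 1
  funext j
  simp only [Equiv.subRight_apply, sub_add_cancel, neg_sub, zpow_sub₀ hB]
  rw [zpow_neg]
  ring

lemma radixVal_le_of_eq_false {B : ℝ} (hB : 1 < B) {d : ℤ → Bool} {m : ℤ}
    (h0 : ∀ j, j < m → d j = false) :
    radixVal B d ≤ B ^ (-m) * (1 - B⁻¹)⁻¹ := by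
  set f : ℤ → ℝ := fun j => (if d j then 1 else 0) * B ^ (-j)
  have hB0 : 0 < B := one_pos.trans hB
  have hf_nonneg : ∀ j, 0 ≤ f j := fun j =>
    mul_nonneg (by split <;> norm_num) (zpow_pos hB0 _).le
  have hsupp : Function.support f ⊆ Set.range (fun n : ℕ => m + n) := by
    intro j hj
    have : m ≤ j := by
      by_contra! hjm
      exact hj (by simp [f, h0 j hjm])
    exact ⟨(j - m).toNat, by simp only; omega⟩
  have hterm : ∀ n : ℕ, f (m + n) ≤ B ^ (-m) * B⁻¹ ^ n := by
    intro n
    rw [inv_pow, ← zpow_natCast, ← zpow_neg, ← zpow_add₀ hB0.ne', ← neg_add]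
    exact mul_le_of_le_one_left (zpow_pos hB0 _).le (by split <;> norm_num)
  have hgeom : Summable (fun n : ℕ => B ^ (-m) * B⁻¹ ^ n) :=
    (summable_geometric_of_lt_one (by positivity) (inv_lt_one_of_one_lt₀ hB)).mul_left _
  calc radixVal B d = ∑' n : ℕ, f (m + n) :=
        ((add_right_injective m).comp Nat.cast_injective |>.tsum_eq hsupp).symm
    _ ≤ ∑' n : ℕ, B ^ (-m) * B⁻¹ ^ n :=
        (hgeom.of_nonneg_of_le (fun n => hf_nonneg _) hterm).tsum_le_tsum hterm hgeom
    _ = B ^ (-m) * (1 - B⁻¹)⁻¹ := by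
        rw [tsum_mul_left, tsum_geometric_of_lt_one (by positivity) (inv_lt_one_of_one_lt₀ hB)]

lemma bddAbove_tileSet {B : ℝ} (hB : 1 < B) (Γ : Set (ℤ → Bool)) (N : ℕ) (s : ℕ → Bool) :
    BddAbove (tileSet Γ B N s) := by
  refine ⟨B ^ (N : ℤ) * (1 - B⁻¹)⁻¹, ?_⟩
  rintro _ ⟨d, -, h0, -, rfl⟩
  simpa only [neg_neg] using radixVal_le_of_eq_false hB h0

/-- `tileSet Γ B N s` reads `s` only at indices `≤ N`, so `Function.update s (N + 1) c` is the
word `s_0 ⋯ s_N c`. -/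
lemma smul_tileSet {Γ : Set (ℤ → Bool)} (hΓ : ∀ d ∈ Γ, ∀ k : ℤ, (fun j => d (j + k)) ∈ Γ)
    {B : ℝ} (hB : B ≠ 0) (N : ℕ) (s : ℕ → Bool) :
    B • tileSet Γ B N s = ⋃ c : Bool, tileSet Γ B (N + 1) (Function.update s (N + 1) c) := by
  ext y
  simp only [Set.mem_smul_set, Set.mem_iUnion, smul_eq_mul]
  constructor
  · rintro ⟨_, ⟨d, hd, h0, hs, rfl⟩, rfl⟩
    refine ⟨d 1, fun j => d (j + 1), hΓ d hd 1, fun j hj => h0 _ (by omega), fun i hi => ?_,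
      by simpa using radixVal_comp_add hB d 1⟩
    rcases Nat.lt_or_ge i (N + 1) with hiN | hiN
    · rw [Function.update_of_ne (by omega), ← hs i (by omega)]
      exact congrArg d (by push_cast; ring)
    · obtain rfl : i = N + 1 := by omega
      rw [Function.update_self]
      exact congrArg d (by push_cast; ring)
  · rintro ⟨c, e, he, h0, hs, rfl⟩
    refine ⟨_, ⟨fun j => e (j + -1), hΓ e he (-1), fun j hj => h0 _ (by omega), fun i hi => ?_,
      rfl⟩, ?_⟩
    · rw [← Function.update_of_ne (show i ≠ N + 1 by omega) c s, ← hs i (by omega)]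
      exact congrArg e (by push_cast; ring)
    · rw [radixVal_comp_add hB, zpow_neg_one, ← mul_assoc, mul_inv_cancel₀ hB, one_mul]

lemma exists_sSup_iUnion_eq {ι : Type*} [Finite ι] {T : ι → Set ℝ} (hbdd : ∀ i, BddAbove (T i))
    (hne : (⋃ i, T i).Nonempty) :
    ∃ i, (T i).Nonempty ∧ sSup (⋃ i, T i) = sSup (T i) := by
  obtain ⟨i, hi, hmax⟩ := Set.exists_max_image {i | (T i).Nonempty} (fun i => sSup (T i))
    (Set.toFinite _) (Set.nonempty_iUnion.mp hne)
  refine ⟨i, hi, IsLUB.csSup_eq ⟨?_, fun u hu => csSup_le hi fun x hx => ?_⟩ hne⟩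
  · rintro x ⟨_, ⟨j, rfl⟩, hx⟩
    exact (le_csSup (hbdd j) hx).trans (hmax j ⟨x, hx⟩)
  · exact hu (Set.mem_iUnion_of_mem i hx)

theorem stmt_15_general (α β : Omega)
    (b B : ℝ) (hb : IsLeast (baseSet α β) b) (hB : B = 1 / b) :
    ∀ x ∈ {x : ℝ | ∃ (N : ℕ) (s : ℕ → Bool),
        (tileSet (dotMinus α β) B N s).Nonempty ∧ x = sSup (tileSet (dotMinus α β) B N s)},
      B * x ∈ {x : ℝ | ∃ (N : ℕ) (s : ℕ → Bool),
        (tileSet (dotMinus α β) B N s).Nonempty ∧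
          x = sSup (tileSet (dotMinus α β) B N s)} := by
  have hB1 : 1 < B := by
    obtain ⟨⟨hb_ge, hb_lt⟩, -⟩ := hb.1
    rw [hB, lt_div_iff₀ (by linarith)]
    linarith
  rintro _ ⟨N, s, hne, rfl⟩
  have htiles := smul_tileSet (Γ := dotMinus α β) (fun _ hd k => comp_add_mem_dot hd k)
    (by positivity : B ≠ 0) N s
  obtain ⟨c, hc, hsup⟩ := exists_sSup_iUnion_eq (fun _ => bddAbove_tileSet hB1 _ _ _)
    (htiles ▸ hne.smul_set)
  refine ⟨N + 1, Function.update s (N + 1) c, hc, ?_⟩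
  rw [← hsup, ← htiles, Real.sSup_smul_of_nonneg (by positivity), smul_eq_mul]

/-- For an admissible non-null pair `(α,β)` with base `B = B_{(α,β)}` and
`Γ = Ω^•_{(α,β,−)}`, the set `X` of right endpoints (suprema) of the nonempty tiles
`T′_s` is invariant under multiplication by `B`: the tiling is self-replicating. -/
theorem stmt_15 (α β : Omega) (hadm : Admissible α β)
    (hnonnull : 0 < growth (OmegaUnion α β))
    (b B : ℝ) (hb : IsLeast (baseSet α β) b) (hB : B = 1 / b) :
    ∀ x ∈ {x : ℝ | ∃ (N : ℕ) (s : ℕ → Bool),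
        (tileSet (dotMinus α β) B N s).Nonempty ∧ x = sSup (tileSet (dotMinus α β) B N s)},
      B * x ∈ {x : ℝ | ∃ (N : ℕ) (s : ℕ → Bool),
        (tileSet (dotMinus α β) B N s).Nonempty ∧
          x = sSup (tileSet (dotMinus α β) B N s)} :=
  stmt_15_general α β b B hb hB
end
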